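/- arXiv:1604.05533 — 2 statements merged into one kernel-verified Lean document; each statement's English description precedes it below -/
import Mathlib

section
/- Let h = [[α,β],[γ,δ]] ∈ GL₂(ℂ) with γ+δ ≠ 0 and h1 = (α+β)/(γ+δ) ≠ 1, and let f = [[0,1],[1,0]]. Then for all k, m ∈ ℤ≥0 and all y, w ∈ ℂ: 𝔹_m^{(−k)}(y, w; hf) = (−1)^m · 𝔹_m^{(−k)}(y, −w−1; h), where hf denotes the matrix product (note that (hf)1 = h1 and the bottom row sum of hf equals γ+δ, so both sides are defined). -/
/-- `Φ(z,−k,y)`: the rational function of `z`, analytic on `ℂ∖{1}`, which equals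
`Σ_{n=0}^∞ (y+n)^k z^n` for `|z| < 1`; defined by `Φ(z,0,y) = 1/(1−z)` and
`Φ(z,−(k+1),y) = (y + θ_z)·Φ(z,−k,y)` with the Euler operator `θ_z = z·d/dz`. -/
noncomputable def PhiNeg : ℕ → ℂ → ℂ → ℂ
  | 0 => fun _ z => 1 / (1 - z)
  | k + 1 => fun y z => y * PhiNeg k y z + z * deriv (PhiNeg k y) z

/-- `j_D(g,z) = cz + d` for `g = [[a,b],[c,d]]`. -/
def jD (g : Matrix (Fin 2) (Fin 2) ℂ) (z : ℂ) : ℂ := g 1 0 * z + g 1 1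

/-- The Möbius action `gz = (az+b)/(cz+d)`. -/
noncomputable def act (g : Matrix (Fin 2) (Fin 2) ℂ) (z : ℂ) : ℂ :=
  (g 0 0 * z + g 0 1) / jD g z

/-- The poly-Bernoulli polynomial `𝔹_m^{(−k)}(y,w;g)`, defined as `m!` times the `m`-th
Taylor coefficient at `t = 0` of `t ↦ e^{wt}·Φ(g e^{−t},−k,y)/j_D(g,e^{−t})`, i.e. the
`m`-th derivative of this function at `0`. -/
noncomputable def polyB (g : Matrix (Fin 2) (Fin 2) ℂ) (k m : ℕ) (y w : ℂ) : ℂ :=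
  iteratedDeriv m (fun t : ℂ =>
    Complex.exp (w * t) * PhiNeg k y (act g (Complex.exp (-t))) /
      jD g (Complex.exp (-t))) 0

/-! Right multiplication by `f` turns `hz` into `h(1/z)` and `j_D(hf, z)` into `z · j_D(h, 1/z)`.
With `z = e^{-t}` the generating function of `hf` at `t` is therefore that of `h` at `-t`, the
extra factor `e^{t}` moving `w` to `-w - 1`; differentiating `m` times at `0` gives `(-1)^m`. -/

open Complex

section swap

variable (g : Matrix (Fin 2) (Fin 2) ℂ) {z : ℂ}

lemma mul_swap_eq : g * !![(0 : ℂ), 1; 1, 0] = !![g 0 1, g 0 0; g 1 1, g 1 0] := by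
  rw [Matrix.eta_fin_two g]
  simp

lemma jD_mul_swap (hz : z ≠ 0) :
    jD (g * !![(0 : ℂ), 1; 1, 0]) z = z * jD g z⁻¹ := by
  simp only [jD, mul_swap_eq, Matrix.of_apply, Matrix.cons_val', Matrix.cons_val_zero,
    Matrix.cons_val_one, Matrix.empty_val', Matrix.cons_val_fin_one]
  field_simp
  ring

lemma act_mul_swap (hz : z ≠ 0) :
    act (g * !![(0 : ℂ), 1; 1, 0]) z = act g z⁻¹ := by
  rw [act, jD_mul_swap g hz, act, ← mul_div_mul_left _ (jD g z⁻¹) hz]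
  congr 1
  simp only [mul_swap_eq, Matrix.of_apply, Matrix.cons_val', Matrix.cons_val_zero,
    Matrix.cons_val_one, Matrix.empty_val', Matrix.cons_val_fin_one]
  field_simp
  ring

end swap

noncomputable def polyBGen (g : Matrix (Fin 2) (Fin 2) ℂ) (k : ℕ) (y w t : ℂ) : ℂ :=
  exp (w * t) * PhiNeg k y (act g (exp (-t))) / jD g (exp (-t))

lemma polyB_eq_iteratedDeriv_polyBGen (g : Matrix (Fin 2) (Fin 2) ℂ) (k m : ℕ) (y w : ℂ) :
    polyB g k m y w = iteratedDeriv m (polyBGen g k y w) 0 := rfl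

lemma polyBGen_mul_swap (g : Matrix (Fin 2) (Fin 2) ℂ) (k : ℕ) (y w t : ℂ) :
    polyBGen (g * !![(0 : ℂ), 1; 1, 0]) k y w t = polyBGen g k y (-w - 1) (-t) := by
  have hE : exp (-t) ≠ 0 := exp_ne_zero _
  have hinv : (exp (-t))⁻¹ = exp t := by rw [exp_neg, inv_inv]
  have hexp : exp ((-w - 1) * -t) = exp (w * t) * exp t := by
    rw [← exp_add]
    ring_nf
  rw [polyBGen, polyBGen, act_mul_swap g hE, jD_mul_swap g hE, hinv, hexp, neg_neg,
    exp_neg]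
  field_simp

theorem stmt16_general (h : Matrix (Fin 2) (Fin 2) ℂ) :
    ∀ (k m : ℕ) (y w : ℂ),
      polyB (h * !![(0 : ℂ), 1; 1, 0]) k m y w = (-1 : ℂ) ^ m * polyB h k m y (-w - 1) := by
  intro k m y w
  have hgen : polyBGen (h * !![(0 : ℂ), 1; 1, 0]) k y w =
      fun t => polyBGen h k y (-w - 1) (-t) :=
    funext (polyBGen_mul_swap h k y w)
  rw [polyB_eq_iteratedDeriv_polyBGen, hgen, iteratedDeriv_comp_neg, neg_zero,
    polyB_eq_iteratedDeriv_polyBGen, smul_eq_mul]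

theorem stmt16 (h : Matrix (Fin 2) (Fin 2) ℂ) (hdet : h.det ≠ 0)
    (hcd : h 1 0 + h 1 1 ≠ 0)
    (hg1 : (h 0 0 + h 0 1) / (h 1 0 + h 1 1) ≠ 1) :
    ∀ (k m : ℕ) (y w : ℂ),
      polyB (h * !![(0 : ℂ), 1; 1, 0]) k m y w = (-1 : ℂ) ^ m * polyB h k m y (-w - 1) :=
  stmt16_general h
end

section
/- Let d ∈ ℂ ∖ {0} and let h_d = [[−1,1],[0,d]] ∈ GL₂(ℂ). Then for all k, m ∈ ℤ≥0 and all y, w ∈ ℂ: 𝔹_m^{(−k)}(y, w; h_d) = Σ_{n=0}^{m} (y+n)^k · Σ_{j=0}^{n} C(n,j)·(−1)^j·(w−j)^m / d^{n+1}. -/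
open Filter Finset Topology Complex

section AnalyticOrder

variable {𝕜 E : Type*} [NontriviallyNormedField 𝕜] [NormedAddCommGroup E] [NormedSpace 𝕜 E]

lemma le_analyticOrderAt_comp_of_apply_eq_zero {f : 𝕜 → E} {g : 𝕜 → 𝕜} {z₀ : 𝕜}
    {N : ℕ} (hf : AnalyticAt 𝕜 f 0) (hN : (N : ℕ∞) ≤ analyticOrderAt f 0)
    (hg : AnalyticAt 𝕜 g z₀) (hg₀ : g z₀ = 0) :
    (N : ℕ∞) ≤ analyticOrderAt (f ∘ g) z₀ := by
  rw [← hg₀] at hf hN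
  have hg₁ : 1 ≤ analyticOrderAt (g · - g z₀) z₀ :=
    Order.one_le_iff_ne_zero.2 <|
      (hg.sub analyticAt_const).analyticOrderAt_ne_zero.2 (sub_self _)
  calc (N : ℕ∞) = N * 1 := (mul_one _).symm
    _ ≤ _ := mul_le_mul' hN hg₁
    _ = _ := (hf.analyticOrderAt_comp hg).symm

lemma iteratedDeriv_eq_of_le_analyticOrderAt_sub [CharZero 𝕜] [CompleteSpace E]
    {f g : 𝕜 → E} {x : 𝕜} {m : ℕ} (hf : AnalyticAt 𝕜 f x) (hg : AnalyticAt 𝕜 g x)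
    (h : ((m + 1 : ℕ) : ℕ∞) ≤ analyticOrderAt (f - g) x) :
    iteratedDeriv m f x = iteratedDeriv m g x := by
  have := (natCast_le_analyticOrderAt_iff_iteratedDeriv_eq_zero (hf.sub hg)).1 h m
    m.lt_succ_self
  rwa [iteratedDeriv_sub hf.contDiffAt hg.contDiffAt, sub_eq_zero] at this

lemma le_analyticOrderAt_euler [CharZero 𝕜] [CompleteSpace 𝕜] {f : 𝕜 → 𝕜} {N : ℕ}
    (hf : AnalyticAt 𝕜 f 0) (hN : (N : ℕ∞) ≤ analyticOrderAt f 0) (c : 𝕜) :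
    (N : ℕ∞) ≤ analyticOrderAt (fun z => c * f z + z * deriv f z) 0 := by
  have hcf : (N : ℕ∞) ≤ analyticOrderAt (fun z => c * f z) 0 :=
    calc (N : ℕ∞) ≤ analyticOrderAt f 0 := hN
      _ ≤ analyticOrderAt (fun _ : 𝕜 => c) 0 + analyticOrderAt f 0 := le_add_self
      _ = _ := (analyticOrderAt_mul analyticAt_const hf).symm
  have hzf : (N : ℕ∞) ≤ analyticOrderAt (fun z => z * deriv f z) 0 := by
    rcases N with _ | n
    · simp
    have hf₀ : f 0 = 0 := apply_eq_zero_of_analyticOrderAt_ne_zero (by rintro h; simp [h] at hN)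
    have hf' := (analyticOrderAt_deriv_ge_iff hf hf₀).2 hN
    calc ((n + 1 : ℕ) : ℕ∞) = 1 + n := by push_cast; ring
      _ ≤ analyticOrderAt (id : 𝕜 → 𝕜) 0 + analyticOrderAt (deriv f) 0 := by
        rw [analyticOrderAt_id]; gcongr
      _ = _ := (analyticOrderAt_mul analyticAt_id hf.deriv).symm
  exact (le_min hcf hzf).trans le_analyticOrderAt_add

lemma iteratedDeriv_mul_comp_eq_of_le_analyticOrderAt_sub [CharZero 𝕜] [CompleteSpace 𝕜]
    {u f φ ψ : 𝕜 → 𝕜} {x : 𝕜} {m : ℕ} (hu : AnalyticAt 𝕜 u x) (hf : AnalyticAt 𝕜 f x)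
    (hf₀ : f x = 0) (hφ : AnalyticAt 𝕜 φ 0) (hψ : AnalyticAt 𝕜 ψ 0)
    (h : ((m + 1 : ℕ) : ℕ∞) ≤ analyticOrderAt (φ - ψ) 0) :
    iteratedDeriv m (fun t => u t * φ (f t)) x =
      iteratedDeriv m (fun t => u t * ψ (f t)) x := by
  refine iteratedDeriv_eq_of_le_analyticOrderAt_sub (hu.mul (hφ.comp_of_eq hf hf₀))
    (hu.mul (hψ.comp_of_eq hf hf₀)) ?_
  have hsub : (fun t => u t * φ (f t)) - (fun t => u t * ψ (f t)) = u * ((φ - ψ) ∘ f) := by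
    funext t
    simp [mul_sub]
  rw [hsub, analyticOrderAt_mul hu ((hφ.sub hψ).comp_of_eq hf hf₀)]
  exact (le_analyticOrderAt_comp_of_apply_eq_zero (hφ.sub hψ) h hf hf₀).trans le_add_self

end AnalyticOrder

lemma analyticOnNhd_phiNeg (k : ℕ) (y : ℂ) : AnalyticOnNhd ℂ (PhiNeg k y) {1}ᶜ := by
  induction k with
  | zero =>
    intro z hz
    exact analyticAt_const.div (analyticAt_const.sub analyticAt_id) (sub_ne_zero.2 (Ne.symm hz))
  | succ k ih =>
    intro z hz
    exact (analyticAt_const.mul (ih z hz)).add (analyticAt_id.mul (ih.deriv z hz))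

def phiNegTrunc (N k : ℕ) (y z : ℂ) : ℂ := ∑ n ∈ range N, (y + n) ^ k * z ^ n

lemma hasDerivAt_phiNegTrunc (N k : ℕ) (y z : ℂ) :
    HasDerivAt (phiNegTrunc N k y) (∑ n ∈ range N, (y + n) ^ k * (n * z ^ (n - 1))) z :=
  HasDerivAt.fun_sum fun n _ => (hasDerivAt_pow n z).const_mul _

lemma differentiable_phiNegTrunc (N k : ℕ) (y : ℂ) : Differentiable ℂ (phiNegTrunc N k y) :=
  fun z => (hasDerivAt_phiNegTrunc N k y z).differentiableAt

lemma euler_phiNegTrunc (N k : ℕ) (y z : ℂ) :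
    y * phiNegTrunc N k y z + z * deriv (phiNegTrunc N k y) z = phiNegTrunc N (k + 1) y z := by
  rw [(hasDerivAt_phiNegTrunc N k y z).deriv, phiNegTrunc, phiNegTrunc, mul_sum, mul_sum,
    ← sum_add_distrib]
  refine sum_congr rfl fun n _ => ?_
  rcases n with _ | n
  · simp [pow_succ, mul_comm]
  · simp only [Nat.add_sub_cancel, pow_succ]
    push_cast
    ring

lemma le_analyticOrderAt_phiNeg_sub_trunc (N k : ℕ) (y : ℂ) :
    (N : ℕ∞) ≤ analyticOrderAt (PhiNeg k y - phiNegTrunc N k y) 0 := by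
  have h0 : (0 : ℂ) ∈ ({1}ᶜ : Set ℂ) := by simp
  have hE (k : ℕ) : AnalyticAt ℂ (PhiNeg k y - phiNegTrunc N k y) 0 :=
    (analyticOnNhd_phiNeg k y 0 h0).sub ((differentiable_phiNegTrunc N k y).analyticAt 0)
  induction k with
  | zero =>
    refine (natCast_le_analyticOrderAt (hE 0)).2
      ⟨fun z => 1 / (1 - z), analyticOnNhd_phiNeg 0 y 0 h0, ?_⟩
    filter_upwards [isOpen_compl_singleton.mem_nhds h0] with z hz
    have hz1 : z - 1 ≠ 0 := sub_ne_zero.2 hz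
    have hz2 : 1 - z ≠ 0 := sub_ne_zero.2 (Ne.symm hz)
    simp only [Pi.sub_apply, PhiNeg, phiNegTrunc, pow_zero, one_mul, geom_sum_eq hz, sub_zero,
      smul_eq_mul]
    field_simp
    ring
  | succ k ih =>
    have hsucc : PhiNeg (k + 1) y - phiNegTrunc N (k + 1) y =ᶠ[𝓝 0] fun z =>
        y * (PhiNeg k y - phiNegTrunc N k y) z +
          z * deriv (PhiNeg k y - phiNegTrunc N k y) z := by
      filter_upwards [isOpen_compl_singleton.mem_nhds h0] with z hz
      rw [Pi.sub_apply, ← euler_phiNegTrunc,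
        deriv_sub (analyticOnNhd_phiNeg k y z hz).differentiableAt
          (differentiable_phiNegTrunc N k y z)]
      simp only [PhiNeg, Pi.sub_apply]
      ring
    rw [analyticOrderAt_congr hsucc]
    exact le_analyticOrderAt_euler (hE k) ih y

lemma exp_mul_mul_one_sub_exp_neg_pow (w t : ℂ) (n : ℕ) :
    exp (w * t) * (1 - exp (-t)) ^ n =
      ∑ j ∈ range (n + 1), (n.choose j : ℂ) * (-1) ^ j * exp ((w - j) * t) := by
  rw [sub_eq_neg_add, add_pow, mul_sum]
  refine sum_congr rfl fun j _ => ?_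
  rw [show (w - j) * t = w * t + j * -t by ring, exp_add, exp_nat_mul, neg_pow]
  ring

lemma iteratedDeriv_exp_mul_mul_one_sub_exp_neg_pow (w : ℂ) (n m : ℕ) :
    iteratedDeriv m (fun t => exp (w * t) * (1 - exp (-t)) ^ n) 0 =
      ∑ j ∈ range (n + 1), (n.choose j : ℂ) * (-1) ^ j * (w - j) ^ m := by
  simp_rw [exp_mul_mul_one_sub_exp_neg_pow]
  rw [iteratedDeriv_fun_sum fun j _ => by fun_prop]
  refine sum_congr rfl fun j _ => ?_
  rw [iteratedDeriv_const_mul _ (by fun_prop), iteratedDeriv_cexp_const_mul]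
  simp

lemma polyB_hd_eq_iteratedDeriv (d : ℂ) (k m : ℕ) (y w : ℂ) :
    polyB !![(-1 : ℂ), 1; 0, d] k m y w =
      iteratedDeriv m (fun t => exp (w * t) / d * PhiNeg k y ((1 - exp (-t)) / d)) 0 := by
  simp only [polyB, act, jD, Matrix.of_apply, Matrix.cons_val', Matrix.cons_val_zero,
    Matrix.cons_val_one, Matrix.empty_val', Matrix.cons_val_fin_one, zero_mul, zero_add,
    neg_one_mul, neg_add_eq_sub]
  congr 1
  funext t
  ring

theorem stmt17_general (d : ℂ) :
    ∀ (k m : ℕ) (y w : ℂ),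
      polyB !![(-1 : ℂ), 1; 0, d] k m y w =
        ∑ n ∈ Finset.range (m + 1), (y + n) ^ k *
          ∑ j ∈ Finset.range (n + 1),
            (n.choose j : ℂ) * (-1) ^ j * (w - j) ^ m / d ^ (n + 1) := by
  intro k m y w
  have hΦ : AnalyticAt ℂ (PhiNeg k y) 0 := analyticOnNhd_phiNeg k y 0 (by simp)
  have htrunc : (fun t => exp (w * t) / d * phiNegTrunc (m + 1) k y ((1 - exp (-t)) / d)) =
      fun t => ∑ n ∈ range (m + 1),
        (y + n) ^ k / d ^ (n + 1) * (exp (w * t) * (1 - exp (-t)) ^ n) := by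
    funext t
    simp only [phiNegTrunc, mul_sum, div_pow]
    refine sum_congr rfl fun n _ => ?_
    ring
  rw [polyB_hd_eq_iteratedDeriv,
    iteratedDeriv_mul_comp_eq_of_le_analyticOrderAt_sub (by fun_prop) (by fun_prop) (by simp) hΦ
      ((differentiable_phiNegTrunc _ k y).analyticAt 0) (le_analyticOrderAt_phiNeg_sub_trunc _ k y),
    htrunc, iteratedDeriv_fun_sum fun n _ => by fun_prop]
  refine sum_congr rfl fun n _ => ?_
  rw [iteratedDeriv_const_mul _ (by fun_prop), iteratedDeriv_exp_mul_mul_one_sub_exp_neg_pow,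
    mul_sum, mul_sum]
  refine sum_congr rfl fun j _ => ?_
  ring

theorem stmt17 (d : ℂ) (hd : d ≠ 0) :
    ∀ (k m : ℕ) (y w : ℂ),
      polyB !![(-1 : ℂ), 1; 0, d] k m y w =
        ∑ n ∈ Finset.range (m + 1), (y + n) ^ k *
          ∑ j ∈ Finset.range (n + 1),
            (n.choose j : ℂ) * (-1) ^ j * (w - j) ^ m / d ^ (n + 1) :=
  stmt17_general d
end
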